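/- arXiv:1809.09755 — 3 statements merged into one kernel-verified Lean document; each statement's English description precedes it below -/
import Mathlib

section
/- In a finite switching state-space model, the filtering mode probability μ_t^m := P(M_t = m | Y_{1:t} = y_{1:t}) satisfies the recursion μ_t^m = (Σ_{n∈M} μ_{t-1}^n · π(n,m) · I_{nm}) / (Σ_{m'∈M} Σ_{n∈M} μ_{t-1}^n · π(n,m') · I_{nm'}), where I_{nm} := Σ_{x'∈S} Σ_{x∈S} g(y_t | x, m) · q(x | x', n, m) · P(X_{t-1} = x' | M_{t-1} = n, Y_{1:t-1} = y_{1:t-1}), provided the event {Y_{1:t} = y_{1:t}} has positive probability and for each n the event {M_{t-1} = n, Y_{1:t-1} = y_{1:t-1}} has positive probability. -/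
open Finset

namespace SwitchingSSM

noncomputable section

/-- A trajectory of a switching state-space model over `T` steps: modes and hidden states
at times `0, 1, ..., T`, and observations at times `1, ..., T` (the observation at time
`i+1` is component `i`). -/
abbrev Traj (M S Y : Type) (T : ℕ) : Type :=
  (Fin (T + 1) → M) × (Fin (T + 1) → S) × (Fin T → Y)

variable {M S Y : Type} [Fintype M] [Fintype S] [Fintype Y]

/-- Joint probability of a complete trajectory of modes, states and observations:
`ρ(m₀) q₀(x₀ | m₀) ∏ₜ π(m₍ₜ₋₁₎, mₜ) q(xₜ | x₍ₜ₋₁₎, m₍ₜ₋₁₎, mₜ) g(yₜ | xₜ, mₜ)`,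
where `pim n m` is `π(n, m)`, `q0 m x` is `q₀(x | m)`, `q x' n m x` is `q(x | x', n, m)`
and `g x m y` is `g(y | x, m)`. -/
def joint (T : ℕ) (rho : M → ℝ) (pim : M → M → ℝ) (q0 : M → S → ℝ)
    (q : S → M → M → S → ℝ) (g : S → M → Y → ℝ) (ω : Traj M S Y T) : ℝ :=
  rho (ω.1 0) * q0 (ω.1 0) (ω.2.1 0) *
    ∏ i : Fin T,
      pim (ω.1 i.castSucc) (ω.1 i.succ) *
        q (ω.2.1 i.castSucc) (ω.1 i.castSucc) (ω.1 i.succ) (ω.2.1 i.succ) *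
          g (ω.2.1 i.succ) (ω.1 i.succ) (ω.2.2 i)

open Classical in
/-- Probability of an event `A` of trajectories. -/
def Pr (T : ℕ) (rho : M → ℝ) (pim : M → M → ℝ) (q0 : M → S → ℝ)
    (q : S → M → M → S → ℝ) (g : S → M → Y → ℝ) (A : Traj M S Y T → Prop) : ℝ :=
  ∑ ω : Traj M S Y T, if A ω then joint T rho pim q0 q g ω else 0

/-- Conditional probability `P(A | B)`. -/
def cPr (T : ℕ) (rho : M → ℝ) (pim : M → M → ℝ) (q0 : M → S → ℝ)
    (q : S → M → M → S → ℝ) (g : S → M → Y → ℝ) (A B : Traj M S Y T → Prop) : ℝ :=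
  Pr T rho pim q0 q g (fun ω => A ω ∧ B ω) / Pr T rho pim q0 q g B

/-!
Summing out the mode, state and observation of the last time step leaves the weight of the
shorter trajectory unchanged, since `π`, `q` and `g` are stochastic; hence an event about times
`≤ t` has the same probability in the model truncated at time `t`. There, splitting off the last
step gives the prediction–update identity

    P(Mₜ = m, Y_{1:t}) =
      ∑ₙ ∑_{x'} P(X₍ₜ₋₁₎ = x', M₍ₜ₋₁₎ = n, Y_{1:t-1}) π(n, m) ∑ₓ g(yₜ | x, m) q(x | x', n, m),

and the recursion follows by dividing numerator and denominator of
`P(Mₜ = m, Y_{1:t}) / ∑_{m'} P(Mₜ = m', Y_{1:t})` by `P(Y_{1:t-1})`.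
-/

lemma _root_.Fin.forall_lt_imp_iff_forall_castLE {n k : ℕ} (h : k ≤ n) {P : Fin n → Prop} :
    (∀ i : Fin n, (i : ℕ) < k → P i) ↔ ∀ j : Fin k, P (Fin.castLE h j) :=
  ⟨fun H j => H _ j.isLt, fun H i hi => H ⟨i, hi⟩⟩

lemma _root_.Finset.div_sum_eq_of_eq_sum {α β γ δ : Type*} [Fintype α] [Fintype β] [Fintype γ]
    [Fintype δ] (N : γ → ℝ) (B : α → ℝ) (A : α → β → ℝ) (P₀ : ℝ) (w : α → γ → ℝ)
    (L : α → γ → β → δ → ℝ) (hN : ∀ c, N c = ∑ a, ∑ b, A a b * (w a c * ∑ d, L a c b d))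
    (hB : ∀ a, B a ≠ 0) (hP₀ : P₀ ≠ 0) (c : γ) :
    N c / ∑ c', N c' =
      (∑ a, B a / P₀ * w a c * ∑ b, ∑ d, L a c b d * (A a b / B a)) /
        ∑ c', ∑ a, B a / P₀ * w a c' * ∑ b, ∑ d, L a c' b d * (A a b / B a) := by
  -- Once the `B a` cancel, each inner sum on the right is `N c / P₀`.
  have key : ∀ c, ∑ a, B a / P₀ * w a c * ∑ b, ∑ d, L a c b d * (A a b / B a) = N c / P₀ := by
    intro c
    rw [hN, sum_div]
    refine sum_congr rfl fun a _ => ?_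
    rw [mul_sum, sum_div]
    refine sum_congr rfl fun b _ => ?_
    rw [← sum_mul]
    field_simp [hB a]
  simp only [key, ← sum_div, div_div_div_cancel_right₀ hP₀]

lemma _root_.Finset.sum_sum_ite_eq_and {α ι β : Type*} [Fintype α] [Fintype ι] [AddCommMonoid β]
    (f : ι → α) (E : ι → Prop) [∀ a i, Decidable (f i = a ∧ E i)] [DecidablePred E]
    (h : α → ι → β) :
    ∑ a, ∑ i, (if f i = a ∧ E i then h a i else 0) = ∑ i, if E i then h (f i) i else 0 := by
  classical
  rw [sum_comm]
  simp only [@eq_comm _ (f _), ite_and, sum_ite_eq', mem_univ, if_true]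

namespace Traj

variable {T : ℕ}

def snoc (ω : Traj M S Y T) (m : M) (x : S) (y : Y) : Traj M S Y (T + 1) :=
  (Fin.snoc ω.1 m, Fin.snoc ω.2.1 x, Fin.snoc ω.2.2 y)

def init (ω : Traj M S Y (T + 1)) : Traj M S Y T :=
  (Fin.init ω.1, Fin.init ω.2.1, Fin.init ω.2.2)

def trunc {k : ℕ} (h : k ≤ T) (ω : Traj M S Y T) : Traj M S Y k :=
  (fun i => ω.1 (Fin.castLE (by omega) i), fun i => ω.2.1 (Fin.castLE (by omega) i),
    fun i => ω.2.2 (Fin.castLE h i))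

omit [Fintype M] [Fintype S] [Fintype Y] in
@[simp]
lemma init_snoc (ω : Traj M S Y T) (m : M) (x : S) (y : Y) : init (snoc ω m x y) = ω := by
  simp [init, snoc]

def snocEquiv (T : ℕ) : Traj M S Y T × M × S × Y ≃ Traj M S Y (T + 1) where
  toFun p := snoc p.1 p.2.1 p.2.2.1 p.2.2.2
  invFun ω := (init ω, ω.1 (Fin.last _), ω.2.1 (Fin.last _), ω.2.2 (Fin.last _))
  left_inv _ := by simp [snoc, init]
  right_inv _ := by simp [snoc, init]

lemma sum_eq_sum_snoc {β : Type*} [AddCommMonoid β] (f : Traj M S Y (T + 1) → β) :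
    ∑ ω, f ω = ∑ ω : Traj M S Y T, ∑ m, ∑ x, ∑ y, f (snoc ω m x y) := by
  simp only [← (snocEquiv T).sum_comp f, Fintype.sum_prod_type]
  rfl

end Traj

section Model

variable {T : ℕ} (rho : M → ℝ) (pim : M → M → ℝ) (q0 : M → S → ℝ) (q : S → M → M → S → ℝ)
  (g : S → M → Y → ℝ)

omit [Fintype M] [Fintype S] [Fintype Y] in
lemma joint_snoc (ω : Traj M S Y T) (m : M) (x : S) (y : Y) :
    joint (T + 1) rho pim q0 q g (Traj.snoc ω m x y) =
      joint T rho pim q0 q g ω *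
        (pim (ω.1 (Fin.last T)) m * q (ω.2.1 (Fin.last T)) (ω.1 (Fin.last T)) m x * g x m y) := by
  simp only [joint, Traj.snoc, Fin.prod_univ_castSucc, Fin.snoc_castSucc, Fin.succ_castSucc,
    Fin.succ_last, Fin.snoc_last]
  rw [show (0 : Fin (T + 2)) = Fin.castSucc 0 from rfl, Fin.snoc_castSucc, Fin.snoc_castSucc]
  ring

lemma sum_transition_eq_one (hpim1 : ∀ a : M, ∑ b : M, pim a b = 1)
    (hq1 : ∀ (x' : S) (a b : M), ∑ x : S, q x' a b x = 1)
    (hg1 : ∀ (x : S) (a : M), ∑ y : Y, g x a y = 1) (n : M) (x' : S) :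
    ∑ m, ∑ x, ∑ y, pim n m * q x' n m x * g x m y = 1 := by
  simp only [← mul_sum, hg1, mul_one, hq1, hpim1]

lemma sum_joint_snoc
    (hstep : ∀ n x', ∑ m, ∑ x, ∑ y, pim n m * q x' n m x * g x m y = 1) (ω : Traj M S Y T) :
    ∑ m, ∑ x, ∑ y, joint (T + 1) rho pim q0 q g (Traj.snoc ω m x y) = joint T rho pim q0 q g ω :=
  calc ∑ m, ∑ x, ∑ y, joint (T + 1) rho pim q0 q g (Traj.snoc ω m x y)
      = joint T rho pim q0 q g ω * ∑ m, ∑ x, ∑ y,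
          pim (ω.1 (Fin.last T)) m * q (ω.2.1 (Fin.last T)) (ω.1 (Fin.last T)) m x * g x m y := by
        simp only [joint_snoc, mul_sum]
    _ = joint T rho pim q0 q g ω := by
        rw [hstep, mul_one]

lemma Pr_comp_init
    (hstep : ∀ n x', ∑ m, ∑ x, ∑ y, pim n m * q x' n m x * g x m y = 1)
    (P : Traj M S Y T → Prop) :
    Pr (T + 1) rho pim q0 q g (fun ω => P (Traj.init ω)) = Pr T rho pim q0 q g P := by
  unfold Pr
  rw [Traj.sum_eq_sum_snoc]
  refine sum_congr rfl fun ω _ => ?_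
  by_cases hP : P ω
  · simp only [Traj.init_snoc, hP, if_true, sum_joint_snoc rho pim q0 q g hstep]
  · simp only [Traj.init_snoc, hP, if_false, sum_const_zero]

lemma Pr_comp_trunc
    (hstep : ∀ n x', ∑ m, ∑ x, ∑ y, pim n m * q x' n m x * g x m y = 1) {k : ℕ} (h : k ≤ T)
    (P : Traj M S Y k → Prop) :
    Pr T rho pim q0 q g (fun ω => P (Traj.trunc h ω)) = Pr k rho pim q0 q g P := by
  induction T, h using Nat.le_induction with
  | base => rfl
  | succ T hkT ih =>
    rw [← ih]
    exact Pr_comp_init rho pim q0 q g hstep (fun σ => P (Traj.trunc hkT σ))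

lemma Pr_eq_sum_fiber {α : Type*} [Fintype α] (f : Traj M S Y T → α) (E : Traj M S Y T → Prop) :
    Pr T rho pim q0 q g E = ∑ a, Pr T rho pim q0 q g (fun ω => f ω = a ∧ E ω) := by
  classical
  unfold Pr
  -- `convert` identifies the classical `Decidable` instances of `Pr` with those of the lemma.
  convert (sum_sum_ite_eq_and f E fun _ ω => joint T rho pim q0 q g ω).symm

lemma Pr_last_mode_obs_succ (ys : Fin (T + 1) → Y) (m : M) :
    Pr (T + 1) rho pim q0 q g (fun ω => ω.1 (Fin.last (T + 1)) = m ∧ ∀ i, ω.2.2 i = ys i) =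
      ∑ n, ∑ x', Pr T rho pim q0 q g (fun ω => ω.2.1 (Fin.last T) = x' ∧
          ω.1 (Fin.last T) = n ∧ ∀ i, ω.2.2 i = ys i.castSucc) *
        (pim n m * ∑ x, g x m (ys (Fin.last T)) * q x' n m x) := by
  classical
  trans ∑ ω : Traj M S Y T, if ∀ i, ω.2.2 i = ys i.castSucc then
    joint T rho pim q0 q g ω * (pim (ω.1 (Fin.last T)) m *
      ∑ x, g x m (ys (Fin.last T)) * q (ω.2.1 (Fin.last T)) (ω.1 (Fin.last T)) m x) else 0
  · unfold Pr
    rw [Traj.sum_eq_sum_snoc]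
    refine sum_congr rfl fun ω _ => ?_
    simp only [joint_snoc]
    simp only [Traj.snoc, Fin.snoc_last, Fin.forall_fin_succ', Fin.snoc_castSucc, ite_and,
      sum_ite_eq', mem_univ, if_true, sum_ite_irrel, sum_const_zero, mul_sum]
    exact if_congr Iff.rfl (sum_congr rfl fun x _ => by ring) rfl
  · unfold Pr
    simp only [sum_mul, ite_mul, zero_mul,
      sum_sum_ite_eq_and (fun ω : Traj M S Y T => ω.2.1 (Fin.last T))]
    rw [sum_sum_ite_eq_and (fun ω : Traj M S Y T => ω.1 (Fin.last T))]

lemma Pr_mode_obs_succ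
    (hstep : ∀ n x', ∑ m, ∑ x, ∑ y, pim n m * q x' n m x * g x m y = 1)
    (yobs : Fin T → Y) {s : ℕ} (hs : s < T) (m : M) :
    Pr T rho pim q0 q g (fun ω => ω.1 ⟨s + 1, by omega⟩ = m ∧
        ∀ i : Fin T, (i : ℕ) < s + 1 → ω.2.2 i = yobs i) =
      ∑ n, ∑ x', Pr T rho pim q0 q g (fun ω => ω.2.1 ⟨s, by omega⟩ = x' ∧
          ω.1 ⟨s, by omega⟩ = n ∧ ∀ i : Fin T, (i : ℕ) < s → ω.2.2 i = yobs i) *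
        (pim n m * ∑ x, g x m (yobs ⟨s, hs⟩) * q x' n m x) := by
  have hs' : s + 1 ≤ T := hs
  let ys : Fin (s + 1) → Y := fun j => yobs (Fin.castLE hs' j)
  calc _ = Pr (s + 1) rho pim q0 q g
          (fun σ => σ.1 (Fin.last (s + 1)) = m ∧ ∀ j, σ.2.2 j = ys j) := by
        rw [← Pr_comp_trunc rho pim q0 q g hstep hs']
        simp only [Fin.forall_lt_imp_iff_forall_castLE hs']
        rfl
    _ = _ := Pr_last_mode_obs_succ rho pim q0 q g ys m
    _ = _ := by
        refine sum_congr rfl fun n _ => sum_congr rfl fun x' _ => congrArg (· * _) ?_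
        rw [← Pr_comp_trunc rho pim q0 q g hstep hs.le]
        simp only [Fin.forall_lt_imp_iff_forall_castLE hs.le]
        rfl

end Model

/-- Recursion for the filtering mode probabilities of a finite switching state-space model:
`μₜᵐ = (∑ₙ μ₍ₜ₋₁₎ⁿ π(n,m) Iₙₘ) / (∑_{m'} ∑ₙ μ₍ₜ₋₁₎ⁿ π(n,m') Iₙₘ')` where
`Iₙₘ = ∑_{x'} ∑_x g(yₜ | x, m) q(x | x', n, m) P(X₍ₜ₋₁₎ = x' | M₍ₜ₋₁₎ = n, Y_{1:t-1} = y_{1:t-1})`,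
provided `{Y_{1:t} = y_{1:t}}` and each `{M₍ₜ₋₁₎ = n, Y_{1:t-1} = y_{1:t-1}}` have positive
probability.  Here `yobs i` denotes the observation `y_{i+1}`. -/
theorem filtering_mode_probability_recursion
    (T : ℕ) (rho : M → ℝ) (pim : M → M → ℝ) (q0 : M → S → ℝ)
    (q : S → M → M → S → ℝ) (g : S → M → Y → ℝ)
    (hpim1 : ∀ a : M, (∑ b : M, pim a b) = 1)
    (hq1 : ∀ (x' : S) (a b : M), (∑ x : S, q x' a b x) = 1)
    (hg1 : ∀ (x : S) (a : M), (∑ y : Y, g x a y) = 1)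
    (yobs : Fin T → Y) (t : ℕ) (ht1 : 1 ≤ t) (ht2 : t ≤ T) (m : M)
    (hpos : 0 < Pr T rho pim q0 q g
      (fun ω => ∀ i : Fin T, (i : ℕ) < t → ω.2.2 i = yobs i))
    (hpos' : ∀ n : M, 0 < Pr T rho pim q0 q g
      (fun ω => ω.1 ⟨t - 1, by omega⟩ = n ∧
        ∀ i : Fin T, (i : ℕ) < t - 1 → ω.2.2 i = yobs i)) :
    cPr T rho pim q0 q g (fun ω => ω.1 ⟨t, by omega⟩ = m)
        (fun ω => ∀ i : Fin T, (i : ℕ) < t → ω.2.2 i = yobs i) =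
      (∑ n : M,
          cPr T rho pim q0 q g (fun ω => ω.1 ⟨t - 1, by omega⟩ = n)
              (fun ω => ∀ i : Fin T, (i : ℕ) < t - 1 → ω.2.2 i = yobs i) *
            pim n m *
            (∑ x' : S, ∑ x : S,
              g x m (yobs ⟨t - 1, by omega⟩) * q x' n m x *
                cPr T rho pim q0 q g (fun ω => ω.2.1 ⟨t - 1, by omega⟩ = x')
                  (fun ω => ω.1 ⟨t - 1, by omega⟩ = n ∧
                    ∀ i : Fin T, (i : ℕ) < t - 1 → ω.2.2 i = yobs i))) /
      (∑ m' : M, ∑ n : M,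
          cPr T rho pim q0 q g (fun ω => ω.1 ⟨t - 1, by omega⟩ = n)
              (fun ω => ∀ i : Fin T, (i : ℕ) < t - 1 → ω.2.2 i = yobs i) *
            pim n m' *
            (∑ x' : S, ∑ x : S,
              g x m' (yobs ⟨t - 1, by omega⟩) * q x' n m' x *
                cPr T rho pim q0 q g (fun ω => ω.2.1 ⟨t - 1, by omega⟩ = x')
                  (fun ω => ω.1 ⟨t - 1, by omega⟩ = n ∧
                    ∀ i : Fin T, (i : ℕ) < t - 1 → ω.2.2 i = yobs i))) := by
  obtain ⟨s, rfl⟩ : ∃ s, t = s + 1 := ⟨t - 1, by omega⟩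
  simp only [Nat.add_sub_cancel] at hpos' ⊢
  have hs : s < T := ht2
  have : Nonempty M := by
    obtain ⟨ω, -, -⟩ := exists_ne_zero_of_sum_ne_zero hpos.ne'
    exact ⟨ω.1 0⟩
  have hP₀ : 0 < Pr T rho pim q0 q g (fun ω => ∀ i : Fin T, (i : ℕ) < s → ω.2.2 i = yobs i) := by
    rw [Pr_eq_sum_fiber rho pim q0 q g (fun ω => ω.1 ⟨s, by omega⟩)]
    exact sum_pos (fun n _ => hpos' n) univ_nonempty
  unfold cPr
  rw [Pr_eq_sum_fiber rho pim q0 q g (fun ω => ω.1 ⟨s + 1, by omega⟩)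
    (fun ω => ∀ i : Fin T, (i : ℕ) < s + 1 → ω.2.2 i = yobs i)]
  exact div_sum_eq_of_eq_sum _ _ _ _ pim (fun n m' x' x => g x m' (yobs ⟨s, hs⟩) * q x' n m' x)
    (Pr_mode_obs_succ rho pim q0 q g (sum_transition_eq_one pim q g hpim1 hq1 hg1) yobs hs)
    (fun n => (hpos' n).ne') hP₀.ne' m

end
end SwitchingSSM
end

section
/- Let Σ be a positive definite n×n real matrix, Q a positive definite m×m real matrix, F an m×n real matrix, and μ ∈ ℝⁿ. Set Σ* := (Σ⁻¹ + FᵀQ⁻¹F)⁻¹ and, for z ∈ ℝᵐ, μ*(z) := Σ*(Σ⁻¹μ + FᵀQ⁻¹z). Then for all x ∈ ℝⁿ and z ∈ ℝᵐ, N(z; Fx, Q) · N(x; μ, Σ) = N(z; Fμ, Q + FΣFᵀ) · N(x; μ*(z), Σ*). -/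
open Matrix

/-- The multivariate Gaussian density `N(x; ν, C)` on `ℝ^d` with mean `ν` and
(positive definite) covariance matrix `C`. -/
noncomputable def gauss (d : ℕ) (C : Matrix (Fin d) (Fin d) ℝ) (ν x : Fin d → ℝ) : ℝ :=
  (2 * Real.pi) ^ (-(d : ℝ) / 2) * C.det ^ (-(1 : ℝ) / 2) *
    Real.exp (-((x - ν) ⬝ᵥ (C⁻¹ *ᵥ (x - ν))) / 2)

/-!
Both sides are Gaussian normalising constants times exponentials of quadratic forms. The
constants agree by the matrix determinant lemma
`det (Q + F Σ Fᵀ) = det Q · det Σ · det (Σ⁻¹ + Fᵀ Q⁻¹ F)`. For the exponents, expand in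
`u = x - μ` and `w = z - F μ` and complete the square in `u` with respect to the posterior
precision `M = Σ⁻¹ + Fᵀ Q⁻¹ F`; the leftover `wᵀ Q⁻¹ w - pᵀ M⁻¹ p` with `p = Fᵀ Q⁻¹ w` is
`wᵀ (Q + F Σ Fᵀ)⁻¹ w` by the Woodbury identity.
-/

namespace Matrix

variable {α : Type*} [CommRing α] {m n : Type*} [Fintype m]

theorem isSymm_transpose_mul_mul_self {A : Matrix m m α} (hA : A.IsSymm) (F : Matrix m n α) :
    (Fᵀ * A * F).IsSymm := by
  rw [IsSymm, transpose_mul, transpose_mul, hA.eq, transpose_transpose, Matrix.mul_assoc]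

variable [Fintype n]

theorem dotProduct_mulVec_eq_transpose_mulVec_dotProduct (v : m → α) (A : Matrix m n α)
    (w : n → α) : v ⬝ᵥ (A *ᵥ w) = (Aᵀ *ᵥ v) ⬝ᵥ w := by
  rw [dotProduct_mulVec, mulVec_transpose]

theorem IsSymm.dotProduct_mulVec_comm {A : Matrix n n α} (hA : A.IsSymm) (v w : n → α) :
    v ⬝ᵥ (A *ᵥ w) = w ⬝ᵥ (A *ᵥ v) := by
  rw [dotProduct_mulVec_eq_transpose_mulVec_dotProduct, hA.eq, dotProduct_comm]

variable [DecidableEq m] [DecidableEq n]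

theorem det_add_mul_mul {A : Matrix m m α} {C : Matrix n n α} (U : Matrix m n α)
    (V : Matrix n m α) (hA : IsUnit A) (hC : IsUnit C) :
    (A + U * C * V).det = A.det * C.det * (C⁻¹ + V * A⁻¹ * U).det := by
  rw [isUnit_iff_isUnit_det] at hA hC
  rw [Matrix.mul_assoc, det_add_mul U (C * V) hA, mul_assoc, ← det_mul, Matrix.mul_add,
    mul_nonsing_inv C hC]
  simp only [Matrix.mul_assoc]

theorem IsSymm.dotProduct_mulVec_sub_two_mul_dotProduct {M : Matrix n n α} (hM : M.IsSymm)
    (hMu : IsUnit M) (u p : n → α) :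
    u ⬝ᵥ (M *ᵥ u) - 2 * (u ⬝ᵥ p) =
      (u - M⁻¹ *ᵥ p) ⬝ᵥ (M *ᵥ (u - M⁻¹ *ᵥ p)) - p ⬝ᵥ (M⁻¹ *ᵥ p) := by
  have hp : M *ᵥ (M⁻¹ *ᵥ p) = p := by
    rw [mulVec_mulVec, mul_nonsing_inv M ((isUnit_iff_isUnit_det M).mp hMu), one_mulVec]
  have hcross : (M⁻¹ *ᵥ p) ⬝ᵥ (M *ᵥ u) = u ⬝ᵥ p := by rw [hM.dotProduct_mulVec_comm, hp]
  rw [mulVec_sub, hp, sub_dotProduct, dotProduct_sub, dotProduct_sub, hcross,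
    dotProduct_comm (M⁻¹ *ᵥ p) p]
  ring

variable {Q : Matrix m m α} {S : Matrix n n α}

theorem dotProduct_inv_add_mul_mul_transpose_mulVec (hQ : Q.IsSymm) (hQu : IsUnit Q)
    (hSu : IsUnit S) (F : Matrix m n α) (hMu : IsUnit (S⁻¹ + Fᵀ * Q⁻¹ * F)) (w : m → α) :
    w ⬝ᵥ ((Q + F * S * Fᵀ)⁻¹ *ᵥ w) =
      w ⬝ᵥ (Q⁻¹ *ᵥ w) - (Fᵀ *ᵥ (Q⁻¹ *ᵥ w)) ⬝ᵥ
        ((S⁻¹ + Fᵀ * Q⁻¹ * F)⁻¹ *ᵥ (Fᵀ *ᵥ (Q⁻¹ *ᵥ w))) := by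
  rw [add_mul_mul_inv_eq_sub Q F S Fᵀ hQu hSu hMu, sub_mulVec, dotProduct_sub]
  congr 1
  simp only [← mulVec_mulVec]
  rw [dotProduct_mulVec_eq_transpose_mulVec_dotProduct, hQ.inv.eq,
    dotProduct_mulVec_eq_transpose_mulVec_dotProduct]

theorem dotProduct_sub_mulVec_add_dotProduct_mulVec_eq_add_sub (hQ : Q.IsSymm)
    (F : Matrix m n α) (w : m → α) (u : n → α) :
    (w - F *ᵥ u) ⬝ᵥ (Q⁻¹ *ᵥ (w - F *ᵥ u)) + u ⬝ᵥ (S⁻¹ *ᵥ u) =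
      w ⬝ᵥ (Q⁻¹ *ᵥ w) +
        (u ⬝ᵥ ((S⁻¹ + Fᵀ * Q⁻¹ * F) *ᵥ u) - 2 * (u ⬝ᵥ (Fᵀ *ᵥ (Q⁻¹ *ᵥ w)))) := by
  have hcross : w ⬝ᵥ (Q⁻¹ *ᵥ (F *ᵥ u)) = u ⬝ᵥ (Fᵀ *ᵥ (Q⁻¹ *ᵥ w)) := by
    rw [hQ.inv.dotProduct_mulVec_comm, dotProduct_comm,
      dotProduct_mulVec_eq_transpose_mulVec_dotProduct, dotProduct_comm]
  have hquad : (F *ᵥ u) ⬝ᵥ (Q⁻¹ *ᵥ (F *ᵥ u)) = u ⬝ᵥ ((Fᵀ * Q⁻¹ * F) *ᵥ u) := by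
    rw [dotProduct_comm, dotProduct_mulVec_eq_transpose_mulVec_dotProduct, dotProduct_comm,
      ← mulVec_mulVec, ← mulVec_mulVec]
  simp only [mulVec_sub, sub_dotProduct, dotProduct_sub, add_mulVec, dotProduct_add]
  rw [hcross, hquad, hQ.inv.dotProduct_mulVec_comm (F *ᵥ u) w, hcross]
  ring

theorem dotProduct_sub_mulVec_add_dotProduct_mulVec_eq_add (hQ : Q.IsSymm) (hS : S.IsSymm)
    (hQu : IsUnit Q) (hSu : IsUnit S) (F : Matrix m n α) (hMu : IsUnit (S⁻¹ + Fᵀ * Q⁻¹ * F))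
    (w : m → α) (u : n → α) :
    (w - F *ᵥ u) ⬝ᵥ (Q⁻¹ *ᵥ (w - F *ᵥ u)) + u ⬝ᵥ (S⁻¹ *ᵥ u) =
      w ⬝ᵥ ((Q + F * S * Fᵀ)⁻¹ *ᵥ w) +
        (u - (S⁻¹ + Fᵀ * Q⁻¹ * F)⁻¹ *ᵥ (Fᵀ *ᵥ (Q⁻¹ *ᵥ w))) ⬝ᵥ
          ((S⁻¹ + Fᵀ * Q⁻¹ * F) *ᵥ (u - (S⁻¹ + Fᵀ * Q⁻¹ * F)⁻¹ *ᵥ (Fᵀ *ᵥ (Q⁻¹ *ᵥ w)))) := by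
  have hM : (S⁻¹ + Fᵀ * Q⁻¹ * F).IsSymm := hS.inv.add (isSymm_transpose_mul_mul_self hQ.inv F)
  rw [dotProduct_sub_mulVec_add_dotProduct_mulVec_eq_add_sub hQ,
    hM.dotProduct_mulVec_sub_two_mul_dotProduct hMu,
    dotProduct_inv_add_mul_mul_transpose_mulVec hQ hQu hSu F hMu]
  ring

theorem dotProduct_sub_mulVec_add_dotProduct_sub_mulVec_eq_add (hQ : Q.IsSymm) (hS : S.IsSymm)
    (hQu : IsUnit Q) (hSu : IsUnit S) (F : Matrix m n α) (hMu : IsUnit (S⁻¹ + Fᵀ * Q⁻¹ * F))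
    (μ x : n → α) (z : m → α) :
    (z - F *ᵥ x) ⬝ᵥ (Q⁻¹ *ᵥ (z - F *ᵥ x)) + (x - μ) ⬝ᵥ (S⁻¹ *ᵥ (x - μ)) =
      (z - F *ᵥ μ) ⬝ᵥ ((Q + F * S * Fᵀ)⁻¹ *ᵥ (z - F *ᵥ μ)) +
        (x - (S⁻¹ + Fᵀ * Q⁻¹ * F)⁻¹ *ᵥ (S⁻¹ *ᵥ μ + Fᵀ *ᵥ (Q⁻¹ *ᵥ z))) ⬝ᵥ
          ((S⁻¹ + Fᵀ * Q⁻¹ * F) *ᵥ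
            (x - (S⁻¹ + Fᵀ * Q⁻¹ * F)⁻¹ *ᵥ (S⁻¹ *ᵥ μ + Fᵀ *ᵥ (Q⁻¹ *ᵥ z)))) := by
  set M := S⁻¹ + Fᵀ * Q⁻¹ * F
  have hresid : z - F *ᵥ x = (z - F *ᵥ μ) - F *ᵥ (x - μ) := by rw [mulVec_sub]; abel
  have hmean : x - M⁻¹ *ᵥ (S⁻¹ *ᵥ μ + Fᵀ *ᵥ (Q⁻¹ *ᵥ z)) =
      (x - μ) - M⁻¹ *ᵥ (Fᵀ *ᵥ (Q⁻¹ *ᵥ (z - F *ᵥ μ))) := by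
    have hinfoVec : S⁻¹ *ᵥ μ + Fᵀ *ᵥ (Q⁻¹ *ᵥ z) = M *ᵥ μ + Fᵀ *ᵥ (Q⁻¹ *ᵥ (z - F *ᵥ μ)) := by
      simp only [M, add_mulVec, mulVec_sub, ← mulVec_mulVec]
      abel
    rw [hinfoVec, mulVec_add, mulVec_mulVec,
      nonsing_inv_mul M ((isUnit_iff_isUnit_det M).mp hMu), one_mulVec]
    abel
  rw [hresid, hmean]
  exact dotProduct_sub_mulVec_add_dotProduct_mulVec_eq_add hQ hS hQu hSu F hMu _ _

end Matrix

theorem gauss_mul_gauss_eq_gauss_mul_gauss {d e : ℕ} {A C : Matrix (Fin d) (Fin d) ℝ}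
    {B D : Matrix (Fin e) (Fin e) ℝ} {νA νC x : Fin d → ℝ} {νB νD y : Fin e → ℝ}
    (hA : 0 ≤ A.det) (hB : 0 ≤ B.det) (hC : 0 ≤ C.det) (hD : 0 ≤ D.det)
    (hdet : A.det * B.det = C.det * D.det)
    (hquad : (x - νA) ⬝ᵥ (A⁻¹ *ᵥ (x - νA)) + (y - νB) ⬝ᵥ (B⁻¹ *ᵥ (y - νB)) =
      (x - νC) ⬝ᵥ (C⁻¹ *ᵥ (x - νC)) + (y - νD) ⬝ᵥ (D⁻¹ *ᵥ (y - νD))) :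
    gauss d A νA x * gauss e B νB y = gauss d C νC x * gauss e D νD y := by
  have hnorm : A.det ^ (-(1 : ℝ) / 2) * B.det ^ (-(1 : ℝ) / 2) =
      C.det ^ (-(1 : ℝ) / 2) * D.det ^ (-(1 : ℝ) / 2) := by
    rw [← Real.mul_rpow hA hB, ← Real.mul_rpow hC hD, hdet]
  have hexp : Real.exp (-((x - νA) ⬝ᵥ (A⁻¹ *ᵥ (x - νA))) / 2) *
        Real.exp (-((y - νB) ⬝ᵥ (B⁻¹ *ᵥ (y - νB))) / 2) =
      Real.exp (-((x - νC) ⬝ᵥ (C⁻¹ *ᵥ (x - νC))) / 2) *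
        Real.exp (-((y - νD) ⬝ᵥ (D⁻¹ *ᵥ (y - νD))) / 2) := by
    rw [← Real.exp_add, ← Real.exp_add]
    congr 1
    linarith
  unfold gauss
  linear_combination
    (2 * Real.pi) ^ (-(d : ℝ) / 2) * (2 * Real.pi) ^ (-(e : ℝ) / 2) *
      (Real.exp (-((x - νC) ⬝ᵥ (C⁻¹ *ᵥ (x - νC))) / 2) *
        Real.exp (-((y - νD) ⬝ᵥ (D⁻¹ *ᵥ (y - νD))) / 2)) * hnorm +
    (2 * Real.pi) ^ (-(d : ℝ) / 2) * (2 * Real.pi) ^ (-(e : ℝ) / 2) *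
      (A.det ^ (-(1 : ℝ) / 2) * B.det ^ (-(1 : ℝ) / 2)) * hexp

/-- Gaussian product factorization underlying backward sampling for the Kalman filter:
`N(z; Fx, Q) · N(x; μ, Σ) = N(z; Fμ, Q + FΣFᵀ) · N(x; μ*(z), Σ*)` where
`Σ* = (Σ⁻¹ + FᵀQ⁻¹F)⁻¹` and `μ*(z) = Σ*(Σ⁻¹μ + FᵀQ⁻¹z)`. -/
theorem gaussian_product_factorization
    {n m : ℕ} (Sig : Matrix (Fin n) (Fin n) ℝ) (Q : Matrix (Fin m) (Fin m) ℝ)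
    (F : Matrix (Fin m) (Fin n) ℝ) (μ : Fin n → ℝ)
    (hSig : Sig.PosDef) (hQ : Q.PosDef) :
    ∀ (x : Fin n → ℝ) (z : Fin m → ℝ),
      gauss m Q (F *ᵥ x) z * gauss n Sig μ x =
        gauss m (Q + F * Sig * Fᵀ) (F *ᵥ μ) z *
          gauss n ((Sig⁻¹ + Fᵀ * Q⁻¹ * F)⁻¹)
            ((Sig⁻¹ + Fᵀ * Q⁻¹ * F)⁻¹ *ᵥ (Sig⁻¹ *ᵥ μ + Fᵀ *ᵥ (Q⁻¹ *ᵥ z))) x := by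
  intro x z
  have hM : (Sig⁻¹ + Fᵀ * Q⁻¹ * F).PosDef := by
    simpa using hSig.inv.add_posSemidef (hQ.inv.posSemidef.conjTranspose_mul_mul_same F)
  have hS : (Q + F * Sig * Fᵀ).PosDef := by
    simpa using hQ.add_posSemidef (hSig.posSemidef.mul_mul_conjTranspose_same F)
  have hQs : Q.IsSymm := isHermitian_iff_isSymm.mp hQ.isHermitian
  have hSigs : Sig.IsSymm := isHermitian_iff_isSymm.mp hSig.isHermitian
  apply gauss_mul_gauss_eq_gauss_mul_gauss hQ.det_pos.le hSig.det_pos.le hS.det_pos.le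
    hM.inv.det_pos.le
  · rw [det_add_mul_mul F Fᵀ hQ.isUnit hSig.isUnit, det_nonsing_inv, Ring.inverse_eq_inv,
      mul_assoc, mul_inv_cancel₀ hM.det_pos.ne', mul_one]
  · rw [nonsing_inv_nonsing_inv _ ((isUnit_iff_isUnit_det _).mp hM.isUnit)]
    exact dotProduct_sub_mulVec_add_dotProduct_sub_mulVec_eq_add hQs hSigs hQ.isUnit hSig.isUnit F
      hM.isUnit μ x z
end

section
/- Let Σ be a positive definite n×n real matrix, Q a positive definite m×m real matrix, F an m×n real matrix, μ ∈ ℝⁿ and z ∈ ℝᵐ. Set Σ* := (Σ⁻¹ + FᵀQ⁻¹F)⁻¹ and μ* := Σ*(Σ⁻¹μ + FᵀQ⁻¹z). Then for all x ∈ ℝⁿ, (z − Fx)ᵀQ⁻¹(z − Fx) + (x − μ)ᵀΣ⁻¹(x − μ) = (x − μ*)ᵀ(Σ*)⁻¹(x − μ*) + (z − Fμ)ᵀ(Q + FΣFᵀ)⁻¹(z − Fμ). -/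
open Matrix

private lemma dot_trans {k l : ℕ} (F : Matrix (Fin k) (Fin l) ℝ) (u : Fin k → ℝ)
    (v : Fin l → ℝ) : u ⬝ᵥ (F *ᵥ v) = (Fᵀ *ᵥ u) ⬝ᵥ v := by
  rw [dotProduct_mulVec, ← mulVec_transpose]

private lemma dot_transT {k l : ℕ} (F : Matrix (Fin k) (Fin l) ℝ) (u : Fin l → ℝ)
    (v : Fin k → ℝ) : u ⬝ᵥ (Fᵀ *ᵥ v) = (F *ᵥ u) ⬝ᵥ v := by
  rw [dot_trans, transpose_transpose]

private lemma dot_swap {k : ℕ} {C : Matrix (Fin k) (Fin k) ℝ} (h : Cᵀ = C) (u v : Fin k → ℝ) :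
    u ⬝ᵥ (C *ᵥ v) = v ⬝ᵥ (C *ᵥ u) := by
  rw [dot_trans, h]; exact dotProduct_comm _ _

private lemma quad_sub {k : ℕ} {C : Matrix (Fin k) (Fin k) ℝ} (h : Cᵀ = C) (u v : Fin k → ℝ) :
    (u - v) ⬝ᵥ (C *ᵥ (u - v)) =
      u ⬝ᵥ (C *ᵥ u) - 2 * (v ⬝ᵥ (C *ᵥ u)) + v ⬝ᵥ (C *ᵥ v) := by
  rw [mulVec_sub, dotProduct_sub, sub_dotProduct, sub_dotProduct, dot_swap h u v]; ring

/-- Quadratic-form completion identity at the core of the Gaussian product factorization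
used for backward sampling in the Kalman filter. -/
theorem quadratic_form_completion
    {n m : ℕ} (Sig : Matrix (Fin n) (Fin n) ℝ) (Q : Matrix (Fin m) (Fin m) ℝ)
    (F : Matrix (Fin m) (Fin n) ℝ) (μ : Fin n → ℝ) (z : Fin m → ℝ)
    (hSig : Sig.PosDef) (hQ : Q.PosDef) :
    ∀ x : Fin n → ℝ,
      (z - F *ᵥ x) ⬝ᵥ (Q⁻¹ *ᵥ (z - F *ᵥ x)) + (x - μ) ⬝ᵥ (Sig⁻¹ *ᵥ (x - μ)) =
        (x - (Sig⁻¹ + Fᵀ * Q⁻¹ * F)⁻¹ *ᵥ (Sig⁻¹ *ᵥ μ + Fᵀ *ᵥ (Q⁻¹ *ᵥ z))) ⬝ᵥ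
            (((Sig⁻¹ + Fᵀ * Q⁻¹ * F)⁻¹)⁻¹ *ᵥ
              (x - (Sig⁻¹ + Fᵀ * Q⁻¹ * F)⁻¹ *ᵥ (Sig⁻¹ *ᵥ μ + Fᵀ *ᵥ (Q⁻¹ *ᵥ z)))) +
          (z - F *ᵥ μ) ⬝ᵥ ((Q + F * Sig * Fᵀ)⁻¹ *ᵥ (z - F *ᵥ μ)) := by
  intro x
  set A := Sig⁻¹ with hAdef
  set B := Q⁻¹ with hBdef
  set M := A + Fᵀ * B * F with hMdef
  have hA : A.PosDef := hSig.inv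
  have hB : B.PosDef := hQ.inv
  have hM : M.PosDef := by
    have := (hB.posSemidef).conjTranspose_mul_mul_same F
    rw [conjTranspose_eq_transpose_of_trivial] at this
    exact hA.add_posSemidef this
  have hMdet : IsUnit M.det := hM.det_pos.ne'.isUnit
  have hMu : IsUnit M := (Matrix.isUnit_iff_isUnit_det _).2 hMdet
  have hQu : IsUnit Q := (Matrix.isUnit_iff_isUnit_det _).2 hQ.det_pos.ne'.isUnit
  have hSu : IsUnit Sig := (Matrix.isUnit_iff_isUnit_det _).2 hSig.det_pos.ne'.isUnit
  have hWood : (Q + F * Sig * Fᵀ)⁻¹ = B - B * F * M⁻¹ * Fᵀ * B :=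
    Matrix.add_mul_mul_inv_eq_sub _ _ _ _ hQu hSu hMu
  have hMinvinv : (M⁻¹)⁻¹ = M := Matrix.nonsing_inv_nonsing_inv _ hMdet
  -- symmetry facts
  have hAs : Aᵀ = A := by
    have h : Aᴴ = A := hA.isHermitian
    rwa [conjTranspose_eq_transpose_of_trivial] at h
  have hBs : Bᵀ = B := by
    have h : Bᴴ = B := hB.isHermitian
    rwa [conjTranspose_eq_transpose_of_trivial] at h
  have hMs : Mᵀ = M := by
    have h : Mᴴ = M := hM.isHermitian
    rwa [conjTranspose_eq_transpose_of_trivial] at h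
  set p := M⁻¹ *ᵥ (A *ᵥ μ + Fᵀ *ᵥ (B *ᵥ z)) with hpdef
  have hp : M *ᵥ p = A *ᵥ μ + Fᵀ *ᵥ (B *ᵥ z) := by
    rw [hpdef, mulVec_mulVec, Matrix.mul_nonsing_inv _ hMdet, one_mulVec]
  have hkey : Fᵀ *ᵥ (B *ᵥ (z - F *ᵥ μ)) = M *ᵥ (p - μ) := by
    rw [mulVec_sub M p μ, hp, hMdef, add_mulVec]
    simp only [mulVec_sub, ← mulVec_mulVec]
    abel
  rw [hWood, hMinvinv]
  -- reduce the Woodbury term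
  have h1 : (B * F * M⁻¹ * Fᵀ * B) *ᵥ (z - F *ᵥ μ) = B *ᵥ (F *ᵥ (p - μ)) := by
    simp only [← mulVec_mulVec]
    rw [hkey, mulVec_mulVec _ M⁻¹ M, Matrix.nonsing_inv_mul _ hMdet, one_mulVec]
  have hW2 : (z - F *ᵥ μ) ⬝ᵥ ((B - B * F * M⁻¹ * Fᵀ * B) *ᵥ (z - F *ᵥ μ)) =
      (z - F *ᵥ μ) ⬝ᵥ (B *ᵥ (z - F *ᵥ μ)) - (p - μ) ⬝ᵥ (M *ᵥ (p - μ)) := by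
    rw [Matrix.sub_mulVec, dotProduct_sub]
    congr 1
    rw [h1, dot_swap hBs, dotProduct_comm, dot_trans, hkey, dotProduct_comm]
  rw [hW2]
  -- expand all quadratic forms
  rw [quad_sub hBs z (F *ᵥ x), quad_sub hAs x μ, quad_sub hMs x p,
    quad_sub hBs z (F *ᵥ μ), quad_sub hMs p μ]
  -- expand M-terms
  have hxMx : x ⬝ᵥ (M *ᵥ x) = x ⬝ᵥ (A *ᵥ x) + (F *ᵥ x) ⬝ᵥ (B *ᵥ (F *ᵥ x)) := by
    rw [hMdef, add_mulVec, dotProduct_add]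
    simp only [← mulVec_mulVec]
    rw [dot_transT F x]
  have hpMx : p ⬝ᵥ (M *ᵥ x) = μ ⬝ᵥ (A *ᵥ x) + (F *ᵥ x) ⬝ᵥ (B *ᵥ z) := by
    rw [dot_swap hMs, hp, dotProduct_add, dot_transT F x, dot_swap hAs]
  have hμMp : μ ⬝ᵥ (M *ᵥ p) = μ ⬝ᵥ (A *ᵥ μ) + (F *ᵥ μ) ⬝ᵥ (B *ᵥ z) := by
    rw [hp, dotProduct_add, dot_transT F μ]
  have hμMμ : μ ⬝ᵥ (M *ᵥ μ) = μ ⬝ᵥ (A *ᵥ μ) + (F *ᵥ μ) ⬝ᵥ (B *ᵥ (F *ᵥ μ)) := by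
    rw [hMdef, add_mulVec, dotProduct_add]
    simp only [← mulVec_mulVec]
    rw [dot_transT F μ]
  rw [hxMx, hpMx, hμMp, hμMμ]
  ring
end
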